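/- arXiv:2305.19961 — 6 statements merged into one kernel-verified Lean document; each statement's English description precedes it below -/
import Mathlib

section
/- Let f: X → X and g: Y → Y be invertible maps on finite sets. Suppose f has order ω and the triple (X, f, F(q)) exhibits the cyclic sieving phenomenon (i.e., for every integer k, the number of elements of X fixed by f^k equals F evaluated at e^{2πik/ω}). Suppose N is a positive integer and χ is a positive rational such that for each orbit size k of f with multiplicity m, the map g has exactly χm orbits of size Nk (and these account for all orbits of g). Then g has order Nω, and the triple (Y, g, χ·[N]_{q^ω}·F(q)) exhibits the cyclic sieving phenomenon, where [N]_{q^ω} = 1 + q^ω + q^{2ω} + ... + q^{(N-1)ω}. -/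
open scoped Classical

/-- The triple `(X, f, F(q))` exhibits the cyclic sieving phenomenon: for every integer `k`,
the number of elements fixed by `f^k` equals `F(e^{2πik/ω})`, where `ω` is the order of `f`. -/
noncomputable def ExhibitsCSP {X : Type*} [Fintype X] (f : Equiv.Perm X) (F : Polynomial ℂ) : Prop :=
  ∀ k : ℤ, ((Finset.univ.filter fun x => (f ^ k) x = x).card : ℂ)
    = F.eval (Complex.exp (2 * (Real.pi : ℂ) * Complex.I * (k : ℂ) / (orderOf f : ℂ)))

/-!
Writing the period of each point of `Y` as `N` times a reduced period, the hypotheses say that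
reduced periods of `g` are distributed like periods of `f`, each class scaled by `χ N`. Hence the
orders match, `g^(N t)` has `χ N` times as many fixed points as `f^t`, and `g^k` has none when
`N ∤ k`. On the polynomial side, at `ζ = e^{2πik/(Nω)}` the factor `[N]_{q^ω}` is a geometric sum
of the `N`-th root of unity `ζ^ω`: it equals `N` when `N ∣ k` (and then `ζ = e^{2πit/ω}` with
`k = N t`) and `0` otherwise.
-/

open Finset Function Complex
open scoped Real

theorem card_filter_comp_eq_sum_card_fiber {Z : Type*} [Fintype Z] (r : Z → ℕ) (P : ℕ → Prop)
    [DecidablePred P] {t : Finset ℕ} (ht : ∀ z, r z ∈ t) :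
    #{z | P (r z)} = ∑ m ∈ t.filter P, #{z | r z = m} := by
  rw [card_eq_sum_card_fiberwise (f := r) (t := t.filter P)]
  · refine sum_congr rfl fun m hm => congrArg card ?_
    ext z
    simp only [mem_filter, mem_univ, true_and, and_iff_right_iff_imp]
    rintro rfl
    exact (mem_filter.1 hm).2
  · intro z hz
    exact mem_filter.2 ⟨ht z, (mem_filter.1 hz).2⟩

section FiberCount

variable {X Y : Type*} [Fintype X] [Fintype Y] {p : Y → ℕ} {q : X → ℕ} {c : ℚ}

theorem card_filter_comp_eq_mul_of_card_fiber_eq_mul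
    (h : ∀ m, (#{y | p y = m} : ℚ) = c * #{x | q x = m}) (P : ℕ → Prop) [DecidablePred P] :
    (#{y | P (p y)} : ℚ) = c * #{x | P (q x)} := by
  rw [card_filter_comp_eq_sum_card_fiber p P (t := univ.image p ∪ univ.image q) (by simp),
    card_filter_comp_eq_sum_card_fiber q P (t := univ.image p ∪ univ.image q) (by simp)]
  push_cast
  rw [mul_sum]
  exact sum_congr rfl fun m _ => h m

theorem range_eq_of_card_fiber_eq_mul (hc : c ≠ 0)
    (h : ∀ m, (#{y | p y = m} : ℚ) = c * #{x | q x = m}) : Set.range p = Set.range q := by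
  ext m
  have hp : m ∈ Set.range p ↔ (#{y | p y = m} : ℚ) ≠ 0 := by simp
  have hq : m ∈ Set.range q ↔ (#{x | q x = m} : ℚ) ≠ 0 := by simp
  rw [hp, hq, h m, mul_ne_zero_iff_left hc]

end FiberCount

namespace Equiv.Perm

variable {α : Type*} (σ : Perm α)

theorem zpow_apply_eq_self_iff_minimalPeriod_dvd (a : α) (k : ℤ) :
    (σ ^ k) a = a ↔ (minimalPeriod σ a : ℤ) ∣ k :=
  MulAction.zpow_smul_eq_iff_minimalPeriod_dvd (a := σ) (b := a)

theorem orderOf_dvd_iff_forall_minimalPeriod_dvd (n : ℕ) :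
    orderOf σ ∣ n ↔ ∀ a, minimalPeriod σ a ∣ n := by
  simp only [orderOf_dvd_iff_pow_eq_one, Equiv.ext_iff, one_apply]
  exact forall_congr' fun a => MulAction.pow_smul_eq_iff_minimalPeriod_dvd (a := σ) (b := a)

theorem minimalPeriod_dvd_orderOf (a : α) : minimalPeriod σ a ∣ orderOf σ :=
  (σ.orderOf_dvd_iff_forall_minimalPeriod_dvd _).1 dvd_rfl a

theorem card_fixedPoints_zpow_eq_zero_of_not_dvd [Fintype α] {N : ℕ}
    (hdvd : ∀ a, N ∣ minimalPeriod σ a) {k : ℤ} (hk : ¬ (N : ℤ) ∣ k) :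
    #{a | (σ ^ k) a = a} = 0 := by
  refine card_eq_zero.2 (filter_eq_empty_iff.2 fun a _ ha => hk ?_)
  exact (Int.natCast_dvd_natCast.2 (hdvd a)).trans
    ((σ.zpow_apply_eq_self_iff_minimalPeriod_dvd a k).1 ha)

theorem orderOf_eq_mul_of_minimalPeriod_eq_mul {β : Type*} [Nonempty α] {τ : Perm β}
    {N : ℕ} (hN : N ≠ 0) {p : β → ℕ} (hp : ∀ b, minimalPeriod τ b = N * p b)
    (hrange : Set.range p = Set.range (minimalPeriod σ)) :
    orderOf τ = N * orderOf σ := by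
  refine Nat.dvd_antisymm ((τ.orderOf_dvd_iff_forall_minimalPeriod_dvd _).2 fun b => ?_) ?_
  · obtain ⟨a, ha⟩ : p b ∈ Set.range (minimalPeriod σ) := hrange ▸ Set.mem_range_self b
    rw [hp, ← ha]
    exact mul_dvd_mul_left N (σ.minimalPeriod_dvd_orderOf a)
  · obtain ⟨b, -⟩ : minimalPeriod σ (Classical.arbitrary α) ∈ Set.range p :=
      hrange ▸ Set.mem_range_self _
    obtain ⟨s, hs⟩ : N ∣ orderOf τ :=
      (Dvd.intro _ (hp b).symm).trans (τ.minimalPeriod_dvd_orderOf b)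
    rw [hs]
    refine mul_dvd_mul_left N ((σ.orderOf_dvd_iff_forall_minimalPeriod_dvd _).2 fun a => ?_)
    obtain ⟨b, hb⟩ : minimalPeriod σ a ∈ Set.range p := hrange ▸ Set.mem_range_self a
    rw [← hb, ← Nat.mul_dvd_mul_iff_left (Nat.pos_of_ne_zero hN), ← hp, ← hs]
    exact τ.minimalPeriod_dvd_orderOf b

theorem card_fixedPoints_zpow_mul_eq_mul {X Y : Type*} [Fintype X] [Fintype Y]
    {f : Perm X} {g : Perm Y} {N : ℕ} (hN : N ≠ 0) {p : Y → ℕ}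
    (hp : ∀ y, minimalPeriod g y = N * p y) {c : ℚ}
    (h : ∀ m, (#{y | p y = m} : ℚ) = c * #{x | minimalPeriod f x = m}) (t : ℤ) :
    (#{y | (g ^ ((N : ℤ) * t)) y = y} : ℚ) = c * #{x | (f ^ t) x = x} := by
  have hN' : (N : ℤ) ≠ 0 := by exact_mod_cast hN
  simp only [zpow_apply_eq_self_iff_minimalPeriod_dvd, hp, Nat.cast_mul,
    mul_dvd_mul_iff_left hN']
  exact card_filter_comp_eq_mul_of_card_fiber_eq_mul h (fun m : ℕ => (m : ℤ) ∣ t)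

end Equiv.Perm

theorem IsPrimitiveRoot.geom_sum_zpow_eq_zero {K : Type*} [Field K] {ξ : K} {N : ℕ}
    (hξ : IsPrimitiveRoot ξ N) {k : ℤ} (hk : ¬ (N : ℤ) ∣ k) :
    ∑ j ∈ range N, (ξ ^ k) ^ j = 0 := by
  have hne : ξ ^ k ≠ 1 := (hξ.zpow_eq_one_iff_dvd k).not.2 hk
  rw [geom_sum_eq hne, ← zpow_natCast, ← zpow_mul, zpow_mul', zpow_natCast, hξ.pow_eq_one,
    one_zpow, sub_self, zero_div]

theorem exp_two_pi_I_div_mul_pow {N ω : ℕ} (hN : N ≠ 0) :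
    exp (2 * π * I / ((N * ω : ℕ) : ℂ)) ^ N = exp (2 * π * I / ω) := by
  rw [← exp_nat_mul]
  congr 1
  push_cast
  field_simp

theorem geom_sum_pow_zpow_exp_two_pi_I_div_mul {N ω : ℕ}
    (hN : N ≠ 0) (hω : ω ≠ 0) (k : ℤ) :
    ∑ j ∈ range N, ((exp (2 * π * I / ((N * ω : ℕ) : ℂ)) ^ k) ^ ω) ^ j =
      if (N : ℤ) ∣ k then (N : ℂ) else 0 := by
  set μ := exp (2 * π * I / ((N * ω : ℕ) : ℂ))
  have hprim : IsPrimitiveRoot (μ ^ ω) N :=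
    (isPrimitiveRoot_exp _ (mul_ne_zero hN hω)).pow (by positivity) (mul_comm _ _)
  have hcomm : (μ ^ k) ^ ω = (μ ^ ω) ^ k := by
    rw [← zpow_natCast, ← zpow_natCast, ← zpow_mul, ← zpow_mul, mul_comm]
  rw [hcomm]
  split_ifs with hk
  · simp [(hprim.zpow_eq_one_iff_dvd k).2 hk]
  · exact hprim.geom_sum_zpow_eq_zero hk

theorem exhibitsCSP_iff {X : Type*} [Fintype X] (f : Equiv.Perm X) (F : Polynomial ℂ) :
    ExhibitsCSP f F ↔
      ∀ k : ℤ, (#{x | (f ^ k) x = x} : ℂ) = F.eval (exp (2 * π * I / orderOf f) ^ k) := by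
  refine forall_congr' fun k => ?_
  rw [← exp_int_mul, mul_div_assoc', mul_comm (k : ℂ)]

theorem stmt0 {X Y : Type*} [Fintype X] [Fintype Y] (hX : Nonempty X)
    (f : Equiv.Perm X) (g : Equiv.Perm Y) (F : Polynomial ℂ)
    (hCSP : ExhibitsCSP f F) (N : ℕ) (hN : 0 < N) (χ : ℚ) (hχ : 0 < χ)
    (hdvd : ∀ y : Y, N ∣ Function.minimalPeriod (fun y => g y) y)
    (hcount : ∀ k : ℕ,
      ((Finset.univ.filter fun y : Y => Function.minimalPeriod (fun y => g y) y = N * k).card : ℚ)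
        = χ * N * ((Finset.univ.filter fun x : X => Function.minimalPeriod (fun x => f x) x = k).card : ℚ)) :
    orderOf g = N * orderOf f ∧
      ExhibitsCSP g ((χ : ℂ) •
        ((∑ j ∈ Finset.range N, (Polynomial.X : Polynomial ℂ) ^ (orderOf f * j)) * F)) := by
  set p : Y → ℕ := fun y => minimalPeriod g y / N
  have hp : ∀ y, minimalPeriod g y = N * p y := fun y => (Nat.mul_div_cancel' (hdvd y)).symm
  have hfiber : ∀ m, (#{y | p y = m} : ℚ) = χ * N * #{x | minimalPeriod f x = m} := fun m => by
    simp only [← hcount, hp, Nat.mul_right_inj hN.ne']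
  have hord : orderOf g = N * orderOf f :=
    f.orderOf_eq_mul_of_minimalPeriod_eq_mul hN.ne' hp
      (range_eq_of_card_fiber_eq_mul (by positivity) hfiber)
  refine ⟨hord, ?_⟩
  rw [exhibitsCSP_iff] at hCSP ⊢
  intro k
  simp only [hord, Polynomial.eval_smul, Polynomial.eval_mul, Polynomial.eval_finsetSum,
    Polynomial.eval_pow, Polynomial.eval_X, pow_mul, smul_eq_mul,
    geom_sum_pow_zpow_exp_two_pi_I_div_mul hN.ne' (orderOf_pos f).ne']
  obtain ⟨t, rfl⟩ | hk := em ((N : ℤ) ∣ k)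
  · rw [if_pos (dvd_mul_right _ _), zpow_mul (exp _), zpow_natCast,
      exp_two_pi_I_div_mul_pow hN.ne', ← hCSP t, ← mul_assoc]
    exact_mod_cast Equiv.Perm.card_fixedPoints_zpow_mul_eq_mul hN.ne' hp hfiber t
  · simp [hk, g.card_fixedPoints_zpow_eq_zero_of_not_dvd hdvd hk]
end

section
/- Let n and d be positive integers with 1 ≤ d ≤ n-1. The rotation operator Rot_{n,d} on compositions of n with d parts, defined by Rot_{n,d}(a_1, a_2, ..., a_d) = (a_2, ..., a_d, a_1), has every orbit size divisible by d/gcd(n,d). -/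
/-- The rotation operator on `d`-tuples: `Rot(a_1, ..., a_d) = (a_2, ..., a_d, a_1)`. -/
def rot (d : ℕ) (a : Fin d → ℕ) : Fin d → ℕ := fun i => a (finRotate d i)

/-!
If `p` is the minimal period of `a` under rotation, then `p ∣ d` and `a` consists of `d / p`
copies of its first `p` entries, so `d / p` divides both `d` and `n = ∑ a i`, hence `gcd n d`.
Therefore `d / gcd n d` divides `d / (d / p) = p`.
-/

open Finset Function Fin.NatCast

theorem Function.Periodic.sum_range_mul {M : Type*} [AddCommMonoid M] {f : ℕ → M} {p : ℕ}
    (hf : Periodic f p) (e : ℕ) :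
    ∑ i ∈ range (e * p), f i = e • ∑ i ∈ range p, f i := by
  induction e with
  | zero => simp
  | succ e ih =>
    rw [add_one_mul, sum_range_add, ih, succ_nsmul]
    congr 1
    exact sum_congr rfl fun i _ => by simpa [add_comm] using hf.nat_mul e i

section Rotation

variable {d : ℕ} [NeZero d]

theorem rot_iterate_apply (k : ℕ) (a : Fin d → ℕ) (i : Fin d) :
    (rot d)^[k] a i = a (i + k) := by
  induction k generalizing i with
  | zero => simp
  | succ k ih =>
    rw [iterate_succ_apply', rot, ih, finRotate_apply, add_right_comm, Nat.cast_succ, add_assoc]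

theorem isPeriodicPt_rot_iff {a : Fin d → ℕ} {k : ℕ} :
    IsPeriodicPt (rot d) k a ↔ Periodic (fun i : ℕ => a i) k := by
  refine ⟨fun h i => ?_, fun h => funext fun i => ?_⟩
  · simpa [rot_iterate_apply] using congrFun h.eq i
  · simpa [rot_iterate_apply] using h i

theorem minimalPeriod_rot_dvd (a : Fin d → ℕ) : minimalPeriod (rot d) a ∣ d :=
  IsPeriodicPt.minimalPeriod_dvd <| isPeriodicPt_rot_iff.mpr fun i => by simp

theorem div_minimalPeriod_rot_dvd_sum (a : Fin d → ℕ) :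
    d / minimalPeriod (rot d) a ∣ ∑ i, a i := by
  obtain ⟨e, he⟩ := minimalPeriod_rot_dvd a
  set p := minimalPeriod (rot d) a
  have hp : 0 < p := Nat.pos_of_ne_zero fun h => NeZero.ne d (by rw [he, h, zero_mul])
  have hblocks := (isPeriodicPt_rot_iff.mp (isPeriodicPt_minimalPeriod (rot d) a)).sum_range_mul e
  rw [mul_comm, ← he, ← Fin.sum_univ_eq_sum_range] at hblocks
  simp only [Fin.cast_val_eq_self] at hblocks
  rw [hblocks, Nat.div_eq_of_eq_mul_right hp he]
  exact Dvd.intro _ rfl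

end Rotation

theorem stmt5_general (n d : ℕ) (hd : 1 ≤ d)
    (a : Fin d → ℕ) (hsum : ∑ i, a i = n) :
    d / Nat.gcd n d ∣ Function.minimalPeriod (rot d) a := by
  have : NeZero d := ⟨by omega⟩
  have hp := minimalPeriod_rot_dvd a
  have hgcd : d / minimalPeriod (rot d) a ∣ Nat.gcd n d :=
    Nat.dvd_gcd (hsum ▸ div_minimalPeriod_rot_dvd_sum a) (Nat.div_dvd_of_dvd hp)
  calc d / Nat.gcd n d ∣ d / (d / minimalPeriod (rot d) a) :=
        Nat.div_dvd_div_left (Nat.gcd_dvd_right n d) hgcd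
    _ = minimalPeriod (rot d) a := Nat.div_div_self hp (NeZero.ne d)

theorem stmt5 (n d : ℕ) (hd : 1 ≤ d) (hdn : d ≤ n - 1) (hn : 1 ≤ n)
    (a : Fin d → ℕ) (hpos : ∀ i, 0 < a i) (hsum : ∑ i, a i = n) :
    d / Nat.gcd n d ∣ Function.minimalPeriod (rot d) a :=
  stmt5_general n d hd a hsum
end

section
/- Let G be a connected graph with n vertices, let v be a vertex of G, let i ∈ ℤ/nℤ, and let B ⊆ ℤ/nℤ with i-1 ∉ B. Then the indicator statistic 𝟙_{v,i} (which assigns 1 to a labeling σ if σ(v) = i and 0 otherwise) is homomesic for the map cyc∘Bro_B with average 1/n: for every orbit O of cyc∘Bro_B on Λ_G, the number of labelings σ ∈ O with σ(v) = i equals |O|/n. -/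
open scoped Classical

noncomputable def toggle {V : Type*} {n : ℕ} (G : SimpleGraph V) (i : ZMod n)
    (σ : V ≃ ZMod n) : V ≃ ZMod n :=
  if G.Adj (σ.symm i) (σ.symm (i + 1)) then σ else σ.trans (Equiv.swap i (i + 1))

noncomputable def applyToggles {V : Type*} {n : ℕ} (G : SimpleGraph V)
    (L : List (ZMod n)) (σ : V ≃ ZMod n) : V ≃ ZMod n :=
  L.foldl (fun τ i => toggle G i τ) σ

noncomputable def tpro {V : Type*} {n : ℕ} (G : SimpleGraph V) (π : Fin n ≃ ZMod n)
    (σ : V ≃ ZMod n) : V ≃ ZMod n :=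
  applyToggles G (List.ofFn fun k => π k) σ

def cycShift {V : Type*} {n : ℕ} (σ : V ≃ ZMod n) : V ≃ ZMod n :=
  σ.trans (Equiv.addRight (1 : ZMod n))

noncomputable def broList {n : ℕ} (B : Finset (ZMod n)) (c : ZMod n) : List (ZMod n) :=
  ((List.range n).map (fun j => c + 1 + (j : ZMod n))).filter (· ∈ B)

noncomputable def cycBro {V : Type*} {n : ℕ} (G : SimpleGraph V) (B : Finset (ZMod n))
    (c : ZMod n) (σ : V ≃ ZMod n) : V ≃ ZMod n :=
  cycShift (applyToggles G (broList B c) σ)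

def linExt {n : ℕ} (o : ZMod n → Bool) (π : Fin n ≃ ZMod n) : Prop :=
  ∀ a : ZMod n, if o a then π.symm a < π.symm (a + 1) else π.symm (a + 1) < π.symm a

/-!
Read the label of a vertex in the linear order `i < i + 1 < ⋯ < i - 1` and lift it to `ℤ` by
adding `n` each time the vertex has been given label `i` (its height). A toggle `τ_j` with
`j ≠ i - 1` moves a label by at most one place in this order and never moves the labels of two
adjacent vertices, so it keeps the order of adjacent vertices; the cyclic shift raises every
height by one. Hence the heights of adjacent vertices always differ by less than `n`, and the order
in which they differ flips exactly when one of them has received `i` once more than the other.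
After a full period the labels are back, so adjacent vertices (and, by connectivity, all
vertices) have received `i` equally often; since each step gives `i` to exactly one vertex, each
vertex receives it `|O| / n` times.
-/

open Finset

theorem SimpleGraph.Preconnected.apply_eq_of_forall_adj {V β : Type*} {G : SimpleGraph V}
    (hG : G.Preconnected) {f : V → β} (hf : ∀ u w, G.Adj u w → f u = f w) (u w : V) :
    f u = f w := by
  obtain ⟨p⟩ := hG u w
  induction p with
  | nil => rfl
  | cons h _ ih => exact (hf _ _ h).trans ih

theorem Int.eq_zero_or_eq_one_of_add_mul_mem_Ioo {n a b : ℤ} (hb₁ : -n < b) (hb₂ : b < n)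
    (h₁ : 0 < b + n * a) (h₂ : b + n * a < n) : (a = 0 ∧ 0 < b) ∨ (a = 1 ∧ b < 0) := by
  rcases lt_trichotomy a 0 with ha | rfl | ha
  · nlinarith
  · omega
  · obtain rfl : a = 1 := by nlinarith
    omega

section CyclicRank

variable {n : ℕ}

def cyclicRank (i x : ZMod n) : ℕ := (x - i).val

theorem cyclicRank_eq_zero {i x : ZMod n} : cyclicRank i x = 0 ↔ x = i := by
  rw [cyclicRank, ZMod.val_eq_zero, sub_eq_zero]

variable [NeZero n] {i x y : ZMod n}

theorem cyclicRank_lt : cyclicRank i x < n := ZMod.val_lt _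

theorem cyclicRank_inj : cyclicRank i x = cyclicRank i y ↔ x = y := by
  rw [cyclicRank, cyclicRank, (ZMod.val_injective n).eq_iff, sub_left_inj]

theorem cyclicRank_add_one : cyclicRank i (x + 1) = (cyclicRank i x + 1) % n := by
  have h : x + 1 - i = ((cyclicRank i x + 1 : ℕ) : ZMod n) := by
    rw [cyclicRank]
    push_cast [ZMod.natCast_zmod_val]
    ring
  rw [cyclicRank, h, ZMod.val_natCast]

theorem cyclicRank_add_one_add_mul :
    (cyclicRank i (x + 1) : ℤ) + n * (if x + 1 = i then 1 else 0) = cyclicRank i x + 1 := by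
  have hlt : cyclicRank i x < n := cyclicRank_lt
  rcases (show cyclicRank i x + 1 ≤ n from hlt).eq_or_lt with h | h
  · have hx : x + 1 = i := cyclicRank_eq_zero.mp (by rw [cyclicRank_add_one, h, Nat.mod_self])
    rw [cyclicRank_add_one, h, Nat.mod_self, if_pos hx]
    omega
  · have hx : x + 1 ≠ i := fun hx => by
      have := cyclicRank_eq_zero.mpr hx
      rw [cyclicRank_add_one, Nat.mod_eq_of_lt h] at this
      omega
    rw [cyclicRank_add_one, Nat.mod_eq_of_lt h, if_neg hx]
    push_cast
    ring

theorem cyclicRank_add_one_of_ne (h : x + 1 ≠ i) : cyclicRank i (x + 1) = cyclicRank i x + 1 := by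
  have := cyclicRank_add_one_add_mul (i := i) (x := x)
  rw [if_neg h] at this
  omega

end CyclicRank

section Toggle

variable {V : Type*} {n : ℕ} (G : SimpleGraph V)

theorem toggle_apply_eq_or (j : ZMod n) (σ : V ≃ ZMod n) (u : V) :
    toggle G j σ u = σ u ∨ (σ u = j ∧ toggle G j σ u = j + 1) ∨
      (σ u = j + 1 ∧ toggle G j σ u = j) := by
  unfold toggle
  split_ifs
  · exact Or.inl rfl
  · simp only [Equiv.trans_apply]
    by_cases h₁ : σ u = j
    · simp [h₁]
    by_cases h₂ : σ u = j + 1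
    · simp [h₂]
    · simp [Equiv.swap_apply_of_ne_of_ne h₁ h₂]

/-- Both labels could move only if `u`, `w` carried `j` and `j + 1`, but then the toggle is
blocked by the edge `u w`. -/
theorem toggle_apply_eq_or_of_adj {u w : V} (huw : G.Adj u w) (j : ZMod n) (σ : V ≃ ZMod n) :
    toggle G j σ u = σ u ∨ toggle G j σ w = σ w := by
  unfold toggle
  split_ifs with hadj
  · exact Or.inl rfl
  by_contra! hmove
  simp only [Equiv.trans_apply, ne_eq, Equiv.swap_apply_ne_self_iff] at hmove
  obtain ⟨⟨-, hu⟩, ⟨-, hw⟩⟩ := hmove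
  have hne : σ u ≠ σ w := σ.injective.ne (G.ne_of_adj huw)
  apply hadj
  rcases hu with hu | hu <;> rcases hw with hw | hw
  · exact absurd (hu.trans hw.symm) hne
  · rwa [σ.symm_apply_eq.mpr hu.symm, σ.symm_apply_eq.mpr hw.symm]
  · rw [σ.symm_apply_eq.mpr hw.symm, σ.symm_apply_eq.mpr hu.symm]
    exact huw.symm
  · exact absurd (hu.trans hw.symm) hne

def PreservesAdjOrder (i : ZMod n) (f : (V ≃ ZMod n) → V ≃ ZMod n) : Prop :=
  ∀ σ u w, G.Adj u w → cyclicRank i (σ u) < cyclicRank i (σ w) →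
    cyclicRank i (f σ u) < cyclicRank i (f σ w)

variable [NeZero n] {i j : ZMod n}

theorem cyclicRank_toggle_apply (hj : j + 1 ≠ i) (σ : V ≃ ZMod n) (u : V) :
    cyclicRank i (toggle G j σ u) = cyclicRank i (σ u) ∨
      cyclicRank i (toggle G j σ u) = cyclicRank i (σ u) + 1 ∨
      cyclicRank i (σ u) = cyclicRank i (toggle G j σ u) + 1 := by
  rcases toggle_apply_eq_or G j σ u with h | ⟨h₁, h₂⟩ | ⟨h₁, h₂⟩
  · exact Or.inl (by rw [h])
  · exact Or.inr (Or.inl (by rw [h₁, h₂, cyclicRank_add_one_of_ne hj]))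
  · exact Or.inr (Or.inr (by rw [h₁, h₂, cyclicRank_add_one_of_ne hj]))

theorem cyclicRank_toggle_lt (hj : j + 1 ≠ i) {σ : V ≃ ZMod n} {u w : V} (huw : G.Adj u w)
    (h : cyclicRank i (σ u) < cyclicRank i (σ w)) :
    cyclicRank i (toggle G j σ u) < cyclicRank i (toggle G j σ w) := by
  have hne : cyclicRank i (toggle G j σ u) ≠ cyclicRank i (toggle G j σ w) :=
    cyclicRank_inj.not.mpr ((toggle G j σ).injective.ne (G.ne_of_adj huw))
  have hu := cyclicRank_toggle_apply G hj σ u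
  have hw := cyclicRank_toggle_apply G hj σ w
  rcases toggle_apply_eq_or_of_adj G huw j σ with hfix | hfix <;> rw [hfix] at hne ⊢ <;> omega

theorem preservesAdjOrder_applyToggles {L : List (ZMod n)} (hL : ∀ j ∈ L, j ≠ i - 1) :
    PreservesAdjOrder G i (applyToggles G L) := by
  intro σ u w huw h
  induction L generalizing σ with
  | nil => exact h
  | cons j L ih =>
    have hj : j + 1 ≠ i := fun hj => hL j List.mem_cons_self (eq_sub_of_add_eq hj)
    exact ih (fun k hk => hL k (List.mem_cons_of_mem j hk)) _ (cyclicRank_toggle_lt G hj huw h)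

end Toggle

theorem ne_of_mem_broList {n : ℕ} {B : Finset (ZMod n)} {c : ZMod n} (hc : c ∉ B) :
    ∀ j ∈ broList B c, j ≠ c := by
  intro j hj hjc
  rw [broList, List.mem_filter, hjc] at hj
  exact hc (by simpa using hj.2)

theorem cycShift_apply {V : Type*} {n : ℕ} (σ : V ≃ ZMod n) (u : V) :
    cycShift σ u = σ u + 1 := rfl

theorem cycBro_eq_comp {V : Type*} {n : ℕ} (G : SimpleGraph V) (B : Finset (ZMod n))
    (c : ZMod n) : cycBro G B c = cycShift ∘ applyToggles G (broList B c) := rfl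

section Orbit

variable {V : Type*} {n : ℕ} (Φ : (V ≃ ZMod n) → V ≃ ZMod n) (σ₀ : V ≃ ZMod n) (i : ZMod n)

/-- Counts steps `1, …, t`, not `0, …, t - 1`: then it goes up exactly when the cyclic shift
wraps a label around to `i`. -/
def hitCount (x : V) (t : ℕ) : ℕ :=
  ∑ s ∈ range t, if (Φ^[s + 1] σ₀) x = i then 1 else 0

def height (x : V) (t : ℕ) : ℤ :=
  cyclicRank i ((Φ^[t] σ₀) x) + n * hitCount Φ σ₀ i x t

variable {Φ σ₀ i}

theorem hitCount_succ (x : V) (t : ℕ) :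
    hitCount Φ σ₀ i x (t + 1) =
      hitCount Φ σ₀ i x t + if (Φ^[t + 1] σ₀) x = i then 1 else 0 :=
  sum_range_succ _ _

theorem hitCount_eq_card_filter_of_iterate_eq {p : ℕ} (hp : Φ^[p] σ₀ = σ₀) (x : V) :
    hitCount Φ σ₀ i x p = #{k ∈ range p | (Φ^[k] σ₀) x = i} := by
  have h := (sum_range_succ (fun k => if (Φ^[k] σ₀) x = i then 1 else 0) p).symm.trans
    (sum_range_succ' (fun k => if (Φ^[k] σ₀) x = i then 1 else 0) p)
  rw [hp, Function.iterate_zero_apply, add_left_inj] at h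
  rw [card_filter, h, hitCount]

theorem sum_hitCount [Fintype V] (t : ℕ) : ∑ x, hitCount Φ σ₀ i x t = t := by
  simp only [hitCount]
  rw [Finset.sum_comm]
  simp [← Equiv.eq_symm_apply]

end Orbit

section Heights

variable {V : Type*} {n : ℕ} [NeZero n] {G : SimpleGraph V} {f : (V ≃ ZMod n) → V ≃ ZMod n}
  {σ₀ : V ≃ ZMod n} {i : ZMod n}

theorem height_succ (x : V) (t : ℕ) :
    height (cycShift ∘ f) σ₀ i x (t + 1) =
      cyclicRank i (f ((cycShift ∘ f)^[t] σ₀) x) + 1 + n * hitCount (cycShift ∘ f) σ₀ i x t := by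
  have h := cyclicRank_add_one_add_mul (i := i) (x := f ((cycShift ∘ f)^[t] σ₀) x)
  rw [height, hitCount_succ, Function.iterate_succ_apply', Function.comp_apply, cycShift_apply]
  push_cast
  linear_combination h

theorem height_sub_height_mem_Ioo
    (hf : PreservesAdjOrder G i f)
    {u w : V} (huw : G.Adj u w) (h₀ : cyclicRank i (σ₀ u) < cyclicRank i (σ₀ w)) (t : ℕ) :
    0 < height (cycShift ∘ f) σ₀ i w t - height (cycShift ∘ f) σ₀ i u t ∧
      height (cycShift ∘ f) σ₀ i w t - height (cycShift ∘ f) σ₀ i u t < n := by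
  induction t with
  | zero =>
    have := cyclicRank_lt (i := i) (x := σ₀ w)
    simp only [height, hitCount, range_zero, sum_empty, Function.iterate_zero_apply]
    omega
  | succ t ih =>
    simp only [height] at ih
    rw [height_succ, height_succ]
    set σ := (cycShift ∘ f)^[t] σ₀
    generalize hitCount (cycShift ∘ f) σ₀ i u t = Hu at ih ⊢
    generalize hitCount (cycShift ∘ f) σ₀ i w t = Hw at ih ⊢
    have hσ : cyclicRank i (σ u) ≠ cyclicRank i (σ w) :=
      cyclicRank_inj.not.mpr (σ.injective.ne (G.ne_of_adj huw))
    have := cyclicRank_lt (i := i) (x := σ u)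
    have := cyclicRank_lt (i := i) (x := σ w)
    have := cyclicRank_lt (i := i) (x := f σ u)
    have := cyclicRank_lt (i := i) (x := f σ w)
    rcases Int.eq_zero_or_eq_one_of_add_mul_mem_Ioo (n := n)
      (b := cyclicRank i (σ w) - cyclicRank i (σ u)) (a := Hw - Hu)
      (by omega) (by omega) (by linarith [ih.1]) (by linarith [ih.2]) with ⟨ha, hb⟩ | ⟨ha, hb⟩
    · obtain rfl : Hw = Hu := by omega
      have := hf σ u w huw (by omega)
      omega
    · obtain rfl : Hw = Hu + 1 := by omega
      have := hf σ w u huw.symm (by omega)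
      push_cast
      constructor <;> linarith

theorem hitCount_eq_of_adj
    (hf : PreservesAdjOrder G i f)
    {p : ℕ} (hp : (cycShift ∘ f)^[p] σ₀ = σ₀) {u w : V} (huw : G.Adj u w) :
    hitCount (cycShift ∘ f) σ₀ i u p = hitCount (cycShift ∘ f) σ₀ i w p := by
  wlog h₀ : cyclicRank i (σ₀ u) < cyclicRank i (σ₀ w) generalizing u w
  · have hne : cyclicRank i (σ₀ u) ≠ cyclicRank i (σ₀ w) :=
      cyclicRank_inj.not.mpr (σ₀.injective.ne (G.ne_of_adj huw))
    exact (this huw.symm (by omega)).symm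
  obtain ⟨h₁, h₂⟩ := height_sub_height_mem_Ioo hf huw h₀ p
  simp only [height, hp] at h₁ h₂
  have := cyclicRank_lt (i := i) (x := σ₀ w)
  rcases Int.eq_zero_or_eq_one_of_add_mul_mem_Ioo (n := n)
    (b := cyclicRank i (σ₀ w) - cyclicRank i (σ₀ u))
    (a := hitCount (cycShift ∘ f) σ₀ i w p - hitCount (cycShift ∘ f) σ₀ i u p)
    (by omega) (by omega) (by linarith) (by linarith) with ⟨ha, -⟩ | ⟨-, hb⟩ <;> omega

theorem card_mul_hitCount_eq [Fintype V] (hG : G.Preconnected)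
    (hf : PreservesAdjOrder G i f)
    {p : ℕ} (hp : (cycShift ∘ f)^[p] σ₀ = σ₀) (v : V) :
    Fintype.card V * hitCount (cycShift ∘ f) σ₀ i v p = p := by
  have hconst (x : V) : hitCount (cycShift ∘ f) σ₀ i x p = hitCount (cycShift ∘ f) σ₀ i v p :=
    hG.apply_eq_of_forall_adj (fun _ _ huw => hitCount_eq_of_adj hf hp huw) x v
  calc Fintype.card V * hitCount (cycShift ∘ f) σ₀ i v p
      = ∑ x, hitCount (cycShift ∘ f) σ₀ i x p := by
        rw [sum_congr rfl fun x _ => hconst x, sum_const, card_univ, smul_eq_mul]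
    _ = p := sum_hitCount p

end Heights

theorem stmt7 {V : Type*} [Fintype V] (n : ℕ) (hcard : Fintype.card V = n)
    (G : SimpleGraph V) (hconn : G.Connected) (v : V) (i : ZMod n)
    (B : Finset (ZMod n)) (hB : i - 1 ∉ B) (σ₀ : V ≃ ZMod n) :
    n * ((Finset.range (Function.minimalPeriod (cycBro G B (i - 1)) σ₀)).filter
          (fun k => ((cycBro G B (i - 1))^[k] σ₀) v = i)).card
      = Function.minimalPeriod (cycBro G B (i - 1)) σ₀ := by
  subst hcard
  have : NeZero (Fintype.card V) := ⟨(Fintype.card_pos_iff.mpr ⟨σ₀.symm 0⟩).ne'⟩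
  rw [cycBro_eq_comp, ← hitCount_eq_card_filter_of_iterate_eq Function.iterate_minimalPeriod]
  exact card_mul_hitCount_eq hconn.preconnected
    (preservesAdjOrder_applyToggles G (ne_of_mem_broList hB)) Function.iterate_minimalPeriod v
end

section
/- Let G be a connected graph with n vertices, B ⊆ ℤ/nℤ with i-1 ∉ B for some fixed i ∈ ℤ/nℤ. Then every orbit of the map cyc∘Bro_B on the set Λ_G of labelings of G has size divisible by n. -/
/-!
Lift a labeling `σ` to integer labels `p : V → ℤ` with `p v ≡ σ v (mod n)`. A toggle swapping the
labels `j, j + 1` of two nonadjacent vertices lifts to adding `+1` and `-1` to their integer labels,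
and `cyc` lifts to adding `1` everywhere, so `m` steps of `cyc` after any sequence of toggles
(such as `Bro_B`) raise `∑ p` by `m n`. Along an edge `uv` the difference `p u - p v` is never divisible by `n` (the labels differ) and a
toggle changes it by at most one (it cannot move both endpoints), so `⌊(p u - p v) / n⌋` never
changes. After one period `m` the new lift `q` lifts `σ` again and agrees with `p` on these floors,
hence `q u - q v = p u - p v` on every edge; by connectivity `q = p + n k` for one integer `k`.
Comparing sums gives `m n = n · n k`, so `n ∣ m`.
-/

open scoped Classical

theorem Int.add_one_ediv_of_not_dvd {n d : ℤ} (h : ¬ n ∣ d + 1) : (d + 1) / n = d / n := by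
  have pos : ∀ m : ℤ, 0 < m → ¬ m ∣ d + 1 → (d + 1) / m = d / m := fun m hm hdvd => by
    have hd := Int.emod_add_mul_ediv d m
    have hr := Int.emod_nonneg d hm.ne'
    have hrm := Int.emod_lt_of_pos d hm
    have hne : d % m + 1 ≠ m := fun he => hdvd ⟨d / m + 1, by rw [mul_add]; linarith⟩
    exact ((Int.ediv_emod_unique (r := d % m + 1) hm).2 ⟨by linarith, by omega, by omega⟩).1
  rcases lt_trichotomy n 0 with hn | rfl | hn
  · have := pos (-n) (by omega) (by rwa [neg_dvd])
    rwa [Int.ediv_neg, Int.ediv_neg, neg_inj] at this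
  · simp
  · exact pos n hn h

theorem Int.ediv_eq_ediv_of_abs_sub_le_one {n d e : ℤ} (hd : ¬ n ∣ d) (he : ¬ n ∣ e)
    (h : |e - d| ≤ 1) : e / n = d / n := by
  rcases abs_sub_le_iff.1 h with ⟨h₁, h₂⟩
  obtain rfl | rfl | rfl : e = d ∨ e = d + 1 ∨ d = e + 1 := by omega
  · rfl
  · exact Int.add_one_ediv_of_not_dvd he
  · exact (Int.add_one_ediv_of_not_dvd hd).symm

theorem SimpleGraph.Reachable.eq_of_forall_adj {V α : Type*} {G : SimpleGraph V} {f : V → α}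
    (hf : ∀ u v, G.Adj u v → f u = f v) {u v : V} (h : G.Reachable u v) : f u = f v := by
  obtain ⟨p⟩ := h
  induction p with
  | nil => rfl
  | cons hadj _ ih => exact (hf _ _ hadj).trans ih

section Lift

variable {V : Type*} {n : ℕ}

def IsLift (σ : V ≃ ZMod n) (p : V → ℤ) : Prop :=
  ∀ v, (p v : ZMod n) = σ v

lemma IsLift.not_dvd_sub {σ : V ≃ ZMod n} {p : V → ℤ} (h : IsLift σ p) {u v : V} (huv : u ≠ v) :
    ¬ (n : ℤ) ∣ p u - p v := by
  rw [← ZMod.intCast_zmod_eq_zero_iff_dvd, Int.cast_sub, h u, h v, sub_eq_zero]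
  exact fun he => huv (σ.injective he)

lemma IsLift.sub_emod_eq {σ : V ≃ ZMod n} {p q : V → ℤ} (hp : IsLift σ p) (hq : IsLift σ q)
    (u v : V) : (q u - q v) % n = (p u - p v) % n := by
  rw [← ZMod.intCast_eq_intCast_iff', Int.cast_sub, Int.cast_sub, hp u, hp v, hq u, hq v]

lemma isLift_val [NeZero n] (σ : V ≃ ZMod n) : IsLift σ fun v => ((σ v).val : ℤ) := fun v => by
  simp

lemma isLift_cycShift {σ : V ≃ ZMod n} {p : V → ℤ} (h : IsLift σ p) :
    IsLift (cycShift σ) fun v => p v + 1 := fun v => by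
  simp [cycShift, h v]

/-- For `n > 0`, `(q u - q v) / n` is `⌊(q u - q v) / n⌋`, the number of times the labels wind
around `ℤ/n` along the edge `uv`. -/
def SameWinding (G : SimpleGraph V) (n : ℕ) (p q : V → ℤ) : Prop :=
  ∀ u v, G.Adj u v → (q u - q v) / n = (p u - p v) / n

lemma SameWinding.trans {G : SimpleGraph V} {p q r : V → ℤ} (hpq : SameWinding G n p q)
    (hqr : SameWinding G n q r) : SameWinding G n p r :=
  fun u v huv => (hqr u v huv).trans (hpq u v huv)

lemma exists_eq_add_mul_of_sameWinding {G : SimpleGraph V} (hG : G.Connected)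
    {σ : V ≃ ZMod n} {p q : V → ℤ} (hp : IsLift σ p) (hq : IsLift σ q)
    (hw : SameWinding G n p q) : ∃ k : ℤ, ∀ v, q v = p v + n * k := by
  have hadj : ∀ u v, G.Adj u v → q u - p u = q v - p v := fun u v huv => by
    have := Int.emod_add_mul_ediv (q u - q v) n
    rw [hp.sub_emod_eq hq, hw u v huv, Int.emod_add_mul_ediv] at this
    linarith
  obtain ⟨v₀⟩ := hG.nonempty
  obtain ⟨k, hk⟩ : (n : ℤ) ∣ q v₀ - p v₀ := by
    rw [← ZMod.intCast_zmod_eq_zero_iff_dvd, Int.cast_sub, hp, hq, sub_self]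
  refine ⟨k, fun v => ?_⟩
  have := (hG.preconnected v v₀).eq_of_forall_adj (f := fun v => q v - p v) hadj
  linarith

end Lift

section Toggle

variable {V : Type*} {n : ℕ} (G : SimpleGraph V) (j : ZMod n)

noncomputable def liftToggle (σ : V ≃ ZMod n) (p : V → ℤ) : V → ℤ :=
  if G.Adj (σ.symm j) (σ.symm (j + 1)) then p
  else fun v => p v + ((if σ v = j then 1 else 0) - if σ v = j + 1 then 1 else 0)

lemma isLift_liftToggle {σ : V ≃ ZMod n} {p : V → ℤ} (h : IsLift σ p) :
    IsLift (toggle G j σ) (liftToggle G j σ p) := by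
  intro v
  unfold liftToggle toggle
  split_ifs with hadj
  · exact h v
  · by_cases h₁ : σ v = j <;> by_cases h₂ : σ v = j + 1 <;>
      simp [h v, h₁, h₂, Equiv.swap_apply_of_ne_of_ne]

lemma sum_liftToggle [Fintype V] (σ : V ≃ ZMod n) (p : V → ℤ) :
    ∑ v, liftToggle G j σ p v = ∑ v, p v := by
  unfold liftToggle
  split_ifs
  · rfl
  · simp [Finset.sum_add_distrib, Finset.sum_sub_distrib, ← Equiv.eq_symm_apply]

lemma abs_liftToggle_sub_sub_le {u v : V} (huv : G.Adj u v) (σ : V ≃ ZMod n) (p : V → ℤ) :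
    |(liftToggle G j σ p u - liftToggle G j σ p v) - (p u - p v)| ≤ 1 := by
  unfold liftToggle
  split_ifs with hadj
  · simp
  have not_both : ∀ {x y}, G.Adj x y → σ x = j → σ y ≠ j + 1 := fun hxy hx hy => hadj <| by
    rwa [← hy, ← hx, σ.symm_apply_apply, σ.symm_apply_apply]
  have := not_both huv
  have := not_both huv.symm
  dsimp only
  split_ifs <;> simp_all

lemma IsLift.sameWinding_liftToggle {σ : V ≃ ZMod n} {p : V → ℤ} (h : IsLift σ p) :
    SameWinding G n p (liftToggle G j σ p) :=
  fun _ _ huv => Int.ediv_eq_ediv_of_abs_sub_le_one (h.not_dvd_sub huv.ne)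
    ((isLift_liftToggle G j h).not_dvd_sub huv.ne) (abs_liftToggle_sub_sub_le G j huv σ p)

end Toggle

section Orbit

variable {V : Type*} [Fintype V] {n : ℕ} (G : SimpleGraph V) (L : List (ZMod n))

lemma IsLift.exists_applyToggles {σ : V ≃ ZMod n} {p : V → ℤ} (h : IsLift σ p) :
    ∃ q, IsLift (applyToggles G L σ) q ∧ ∑ v, q v = ∑ v, p v ∧ SameWinding G n p q := by
  induction L generalizing σ p with
  | nil => exact ⟨p, h, rfl, fun _ _ _ => rfl⟩
  | cons j L ih =>
    obtain ⟨q, hq, hsum, hw⟩ := ih (isLift_liftToggle G j h)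
    exact ⟨q, hq, hsum.trans (sum_liftToggle G j σ p), (h.sameWinding_liftToggle G j).trans hw⟩

lemma IsLift.exists_iterate_cycShift_comp_applyToggles {σ : V ≃ ZMod n} {p : V → ℤ}
    (h : IsLift σ p) (m : ℕ) :
    ∃ q, IsLift ((cycShift ∘ applyToggles G L)^[m] σ) q ∧
      ∑ v, q v = ∑ v, p v + m * Fintype.card V ∧ SameWinding G n p q := by
  induction m generalizing σ p with
  | zero => exact ⟨p, h, by simp, fun _ _ _ => rfl⟩
  | succ m ih =>
    obtain ⟨q, hq, hsum, hw⟩ := h.exists_applyToggles G L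
    obtain ⟨r, hr, hsum', hw'⟩ := ih (isLift_cycShift hq)
    refine ⟨r, hr, ?_, (hw.trans fun u v _ => by rw [add_sub_add_right_eq_sub]).trans hw'⟩
    rw [hsum', Finset.sum_add_distrib, hsum, Finset.sum_const, Finset.card_univ, nsmul_one]
    push_cast
    ring

theorem dvd_minimalPeriod_cycShift_comp_applyToggles (hcard : Fintype.card V = n)
    (hG : G.Connected) (σ : V ≃ ZMod n) :
    n ∣ Function.minimalPeriod (cycShift ∘ applyToggles G L) σ := by
  have := hG.nonempty
  have : NeZero n := ⟨hcard ▸ Fintype.card_ne_zero⟩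
  set m := Function.minimalPeriod (cycShift ∘ applyToggles G L) σ
  have hp := isLift_val σ
  obtain ⟨q, hq, hsum, hw⟩ := hp.exists_iterate_cycShift_comp_applyToggles G L m
  rw [Function.iterate_minimalPeriod] at hq
  obtain ⟨k, hk⟩ := exists_eq_add_mul_of_sameWinding hG hp hq hw
  simp only [hk, Finset.sum_add_distrib, Finset.sum_const, Finset.card_univ, hcard,
    nsmul_eq_mul, add_right_inj, mul_comm (m : ℤ)] at hsum
  exact Int.natCast_dvd_natCast.mp ⟨k, (mul_left_cancel₀ (mod_cast NeZero.ne n) hsum).symm⟩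

end Orbit

theorem stmt8_general {V : Type*} [Fintype V] (n : ℕ) (hcard : Fintype.card V = n)
    (G : SimpleGraph V) (hconn : G.Connected) (i : ZMod n)
    (B : Finset (ZMod n)) (σ : V ≃ ZMod n) :
    n ∣ Function.minimalPeriod (cycBro G B (i - 1)) σ :=
  dvd_minimalPeriod_cycShift_comp_applyToggles G (broList B (i - 1)) hcard hconn σ

theorem stmt8 {V : Type*} [Fintype V] (n : ℕ) (hcard : Fintype.card V = n)
    (G : SimpleGraph V) (hconn : G.Connected) (i : ZMod n)
    (B : Finset (ZMod n)) (hB : i - 1 ∉ B) (σ : V ≃ ZMod n) :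
    n ∣ Function.minimalPeriod (cycBro G B (i - 1)) σ :=
  stmt8_general n hcard G hconn i B σ
end

section
/- Let n ≥ 2 and let β' be the acyclic orientation of Cycle_n obtained from an acyclic orientation β by flipping a source vertex i into a sink (i.e., reversing the orientations of the two edges incident to i). Then for any graph G on n vertices, TPro_β ∘ τ_i = τ_i ∘ TPro_{β'} as maps on Λ_G; in particular, TPro_β and TPro_{β'} are dynamically equivalent (conjugate by a bijection of Λ_G). -/
open scoped Classical

/-!
Toggles with non-adjacent indices commute, so the product of the toggles along a linear
extension of an orientation does not depend on the extension. As `i` is a source of `β`, some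
linear extension of `β` starts with `i`, giving `TPro_β = T ∘ τ_i`; as `i` is a sink of `β'`, some
linear extension of `β'` ends with `i`, giving `TPro_β' = τ_i ∘ T'`. Away from `i` the two
orientations agree, so the remaining letters can be taken in the same order and `T = T'`.
Since `τ_i` is an involution, `TPro_β ∘ τ_i = T = τ_i ∘ TPro_β'`.
-/

namespace List

variable {α β : Type*} {f : β → α → β}

theorem foldl_append_cons_eq_foldl_cons {x : α} {l₁ l₂ : List α}
    (h : ∀ y ∈ l₁, ∀ b, f (f b y) x = f (f b x) y) (b : β) :
    (l₁ ++ x :: l₂).foldl f b = (x :: (l₁ ++ l₂)).foldl f b := by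
  induction l₁ generalizing b with
  | nil => rfl
  | cons y l₁ ih =>
    simp only [cons_append, foldl_cons] at ih ⊢
    rw [ih (fun z hz => h z (mem_cons_of_mem _ hz)), h y mem_cons_self]

theorem Perm.foldl_eq_of_pairwise {R : α → α → Prop}
    (hf : ∀ x y, ¬R x y → ¬R y x → ∀ b, f (f b x) y = f (f b y) x)
    {l₁ l₂ : List α} (hp : l₁.Perm l₂) (h₁ : l₁.Pairwise fun a b => ¬R b a)
    (h₂ : l₂.Pairwise fun a b => ¬R b a) (b : β) : l₁.foldl f b = l₂.foldl f b := by
  induction l₁ generalizing l₂ b with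
  | nil => rw [← hp.nil_eq]
  | cons x l ih =>
    obtain ⟨s, t, rfl⟩ := append_of_mem (hp.subset mem_cons_self)
    have hcomm : ∀ y ∈ s, ∀ b, f (f b y) x = f (f b x) y := by
      intro y hy b
      by_cases hyx : y = x
      · rw [hyx]
      have hyl : y ∈ l := (mem_cons.mp (hp.symm.subset (mem_append_left _ hy))).resolve_left hyx
      exact hf y x (pairwise_cons.mp h₁ |>.1 y hyl)
        ((pairwise_append.mp h₂).2.2 y hy x mem_cons_self) b
    rw [foldl_append_cons_eq_foldl_cons hcomm, foldl_cons, foldl_cons]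
    exact ih (hp.trans perm_middle).cons_inv h₁.of_cons
      (h₂.sublist ((sublist_cons_self x t).append_left s)) _

end List

section Orientation

variable {n : ℕ} {o : ZMod n → Bool} {i : ZMod n}

/-- The arrows `a → b` of the orientation `o` of `Cycle_n`: the edge `{a, a + 1}` points
forward iff `o a`. -/
def cycArrow (o : ZMod n → Bool) (a b : ZMod n) : Prop :=
  (b = a + 1 ∧ o a = true) ∨ (a = b + 1 ∧ o b = false)

/-- The orientation `β'` of the paper: both edges at `i` are reversed when `i` is a source. -/
def flipAt (o : ZMod n → Bool) (i : ZMod n) : ZMod n → Bool :=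
  fun j => if j = i then false else if j = i - 1 then true else o j

lemma linExt.lt_of_cycArrow {π : Fin n ≃ ZMod n} (hπ : linExt o π) {a b : ZMod n}
    (h : cycArrow o a b) : π.symm a < π.symm b := by
  rcases h with ⟨rfl, ho⟩ | ⟨rfl, ho⟩
  · simpa [ho] using hπ a
  · simpa [ho] using hπ b

lemma linExt.pairwise_ofFn {π : Fin n ≃ ZMod n} (hπ : linExt o π) :
    (List.ofFn fun k => π k).Pairwise fun a b => ¬cycArrow o b a :=
  List.pairwise_ofFn.mpr fun _ _ hkl h => lt_asymm hkl (by simpa using hπ.lt_of_cycArrow h)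

lemma cycArrow_flipAt_iff {a b : ZMod n} (ha : a ≠ i) (hb : b ≠ i) :
    cycArrow (flipAt o i) a b ↔ cycArrow o a b := by
  have hflip : ∀ {x y : ZMod n}, x ≠ i → y = x + 1 → y ≠ i → flipAt o i x = o x := by
    intro x y hx hxy hy
    have hx' : x ≠ i - 1 := by
      rintro rfl
      exact hy (by rw [hxy, sub_add_cancel])
    simp [flipAt, hx, hx']
  refine or_congr (and_congr_right fun h => ?_) (and_congr_right fun h => ?_)
  · rw [hflip ha h hb]
  · rw [hflip hb h ha]

lemma not_cycArrow_into_source (hi : o i = true ∧ o (i - 1) = false) (a : ZMod n) :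
    ¬cycArrow o a i := by
  rintro (⟨h, ho⟩ | ⟨rfl, ho⟩)
  · simp [eq_sub_of_add_eq h.symm, hi.2] at ho
  · simp [hi.1] at ho

lemma not_cycArrow_flipAt_out_of_source (hi : o i = true ∧ o (i - 1) = false) (b : ZMod n) :
    ¬cycArrow (flipAt o i) i b := by
  have hne : i - 1 ≠ i := fun h => by simpa [h, hi.1] using hi.2
  rintro (⟨-, ho⟩ | ⟨h, ho⟩)
  · simp [flipAt] at ho
  · rw [eq_sub_of_add_eq h.symm] at ho
    simp [flipAt, hne] at ho

end Orientation

section Toggles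

variable {V : Type*} {n : ℕ} (G : SimpleGraph V) {o : ZMod n → Bool} {i : ZMod n}

lemma toggle_symm_apply_of_ne {a b : ZMod n} (σ : V ≃ ZMod n) (h₁ : a ≠ b) (h₂ : a ≠ b + 1) :
    (toggle G b σ).symm a = σ.symm a := by
  unfold toggle
  split_ifs
  · rfl
  · simp [Equiv.swap_apply_of_ne_of_ne h₁ h₂]

lemma toggle_involutive (i : ZMod n) : Function.Involutive (toggle G i) := by
  intro σ
  by_cases h : G.Adj (σ.symm i) (σ.symm (i + 1))
  · simp [toggle, h]
  · have h' : ¬G.Adj ((σ.trans (Equiv.swap i (i + 1))).symm i)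
        ((σ.trans (Equiv.swap i (i + 1))).symm (i + 1)) := by
      simpa using fun hadj => h hadj.symm
    simp only [toggle, h, h', if_false, Equiv.trans_assoc]
    simp

lemma toggle_toggle_comm {a b : ZMod n} (hab : a ≠ b) (h₁ : b ≠ a + 1) (h₂ : a ≠ b + 1)
    (σ : V ≃ ZMod n) : toggle G a (toggle G b σ) = toggle G b (toggle G a σ) := by
  have hdisj : (Equiv.swap a (a + 1)).Disjoint (Equiv.swap b (b + 1)) := by
    intro x
    by_cases hx : x = a ∨ x = a + 1
    · right
      rcases hx with rfl | rfl
      · exact Equiv.swap_apply_of_ne_of_ne hab h₂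
      · exact Equiv.swap_apply_of_ne_of_ne h₁.symm (fun h => hab (add_right_cancel h))
    · push Not at hx
      exact .inl (Equiv.swap_apply_of_ne_of_ne hx.1 hx.2)
  have hswap : (Equiv.swap b (b + 1)).trans (Equiv.swap a (a + 1))
      = (Equiv.swap a (a + 1)).trans (Equiv.swap b (b + 1)) := hdisj.commute
  conv_lhs => rw [toggle, toggle_symm_apply_of_ne G σ hab h₂,
    toggle_symm_apply_of_ne G σ h₁.symm (fun h => hab (add_right_cancel h))]
  conv_rhs => rw [toggle, toggle_symm_apply_of_ne G σ hab.symm h₁,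
    toggle_symm_apply_of_ne G σ h₂.symm (fun h => hab (add_right_cancel h).symm)]
  by_cases hA : G.Adj (σ.symm a) (σ.symm (a + 1)) <;>
    by_cases hB : G.Adj (σ.symm b) (σ.symm (b + 1)) <;>
      simp [toggle, hA, hB, Equiv.trans_assoc, hswap]

lemma toggle_toggle_comm_of_not_cycArrow {a b : ZMod n}
    (hab : ¬cycArrow o a b) (hba : ¬cycArrow o b a) (σ : V ≃ ZMod n) :
    toggle G b (toggle G a σ) = toggle G a (toggle G b σ) := by
  by_cases h : a = b
  · rw [h]
  refine toggle_toggle_comm G (Ne.symm h) (fun h₁ => ?_) (fun h₂ => ?_) σ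
  · cases ho : o b
    · exact hab (.inr ⟨h₁, ho⟩)
    · exact hba (.inl ⟨h₁, ho⟩)
  · cases ho : o a
    · exact hba (.inr ⟨h₂, ho⟩)
    · exact hab (.inl ⟨h₂, ho⟩)

lemma applyToggles_eq_of_perm {l₁ l₂ : List (ZMod n)} (hp : l₁.Perm l₂)
    (h₁ : l₁.Pairwise fun a b => ¬cycArrow o b a) (h₂ : l₂.Pairwise fun a b => ¬cycArrow o b a)
    (σ : V ≃ ZMod n) : applyToggles G l₁ σ = applyToggles G l₂ σ :=
  hp.foldl_eq_of_pairwise (fun _ _ hab hba τ => toggle_toggle_comm_of_not_cycArrow G hab hba τ)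
    h₁ h₂ σ

lemma tpro_eq_applyToggles {π : Fin n ≃ ZMod n} (hπ : linExt o π)
    {l : List (ZMod n)} (hl : l.Nodup) (hmem : ∀ a, a ∈ l)
    (hpw : l.Pairwise fun a b => ¬cycArrow o b a) (σ : V ≃ ZMod n) :
    tpro G π σ = applyToggles G l σ := by
  refine applyToggles_eq_of_perm G ?_ hπ.pairwise_ofFn hpw σ
  refine (List.perm_ext_iff_of_nodup (List.nodup_ofFn.mpr π.injective) hl).mpr fun a => ?_
  exact iff_of_true (List.mem_ofFn.mpr ⟨π.symm a, π.apply_symm_apply a⟩) (hmem a)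

lemma tpro_eq_applyToggles_cons (hi : o i = true ∧ o (i - 1) = false) {π : Fin n ≃ ZMod n}
    (hπ : linExt o π) {l : List (ZMod n)} (hl : l.Nodup) (hmem : ∀ a, a ∈ l ↔ a ≠ i)
    (hpw : l.Pairwise fun a b => ¬cycArrow o b a) (σ : V ≃ ZMod n) :
    tpro G π σ = applyToggles G (i :: l) σ := by
  refine tpro_eq_applyToggles G hπ ?_ (fun a => ?_) ?_ σ
  · exact List.nodup_cons.mpr ⟨fun h => (hmem i).mp h rfl, hl⟩
  · by_cases h : a = i
    · exact h ▸ List.mem_cons_self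
    · exact List.mem_cons_of_mem _ ((hmem a).mpr h)
  · exact List.pairwise_cons.mpr ⟨fun a _ => not_cycArrow_into_source hi a, hpw⟩

lemma tpro_flipAt_eq_applyToggles_concat (hi : o i = true ∧ o (i - 1) = false)
    {π' : Fin n ≃ ZMod n} (hπ' : linExt (flipAt o i) π') {l : List (ZMod n)} (hl : l.Nodup)
    (hmem : ∀ a, a ∈ l ↔ a ≠ i) (hpw : l.Pairwise fun a b => ¬cycArrow o b a)
    (σ : V ≃ ZMod n) : tpro G π' σ = applyToggles G (l ++ [i]) σ := by
  refine tpro_eq_applyToggles G hπ' ?_ (fun a => ?_) ?_ σ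
  · exact hl.append (List.nodup_singleton i)
      (fun a ha hai => (hmem a).mp ha (List.mem_singleton.mp hai))
  · by_cases h : a = i
    · simp [h]
    · exact List.mem_append_left _ ((hmem a).mpr h)
  · refine List.pairwise_append.mpr ⟨?_, List.pairwise_singleton _ _, fun a _ b hb => ?_⟩
    · refine hpw.imp_of_mem fun ha hb hab => ?_
      rwa [cycArrow_flipAt_iff ((hmem _).mp hb) ((hmem _).mp ha)]
    · exact List.mem_singleton.mp hb ▸ not_cycArrow_flipAt_out_of_source hi a

theorem tpro_toggle_eq_toggle_tpro_flipAt (hi : o i = true ∧ o (i - 1) = false)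
    {π π' : Fin n ≃ ZMod n} (hπ : linExt o π) (hπ' : linExt (flipAt o i) π')
    (σ : V ≃ ZMod n) : tpro G π (toggle G i σ) = toggle G i (tpro G π' σ) := by
  set l := (List.ofFn fun k => π k).erase i
  have hnd : (List.ofFn fun k => π k).Nodup := List.nodup_ofFn.mpr π.injective
  have hl : l.Nodup := hnd.erase i
  have hmem : ∀ a, a ∈ l ↔ a ≠ i := fun a => by
    rw [hnd.mem_erase_iff, List.mem_ofFn]
    exact and_iff_left ⟨π.symm a, π.apply_symm_apply a⟩
  have hpw : l.Pairwise fun a b => ¬cycArrow o b a := hπ.pairwise_ofFn.erase i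
  calc tpro G π (toggle G i σ) = applyToggles G (i :: l) (toggle G i σ) :=
        tpro_eq_applyToggles_cons G hi hπ hl hmem hpw _
    _ = applyToggles G l σ := by rw [applyToggles, List.foldl_cons, toggle_involutive]; rfl
    _ = toggle G i (applyToggles G (l ++ [i]) σ) := by
        simp only [applyToggles, List.foldl_append, List.foldl_cons, List.foldl_nil,
          toggle_involutive G i _]
    _ = toggle G i (tpro G π' σ) := by
        rw [tpro_flipAt_eq_applyToggles_concat G hi hπ' hl hmem hpw]

end Toggles

theorem stmt9_general {V : Type*} (n : ℕ)
    (G : SimpleGraph V) (o : ZMod n → Bool) (i : ZMod n)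
    (hsource : o i = true ∧ o (i - 1) = false)
    (o' : ZMod n → Bool)
    (ho' : o' = fun j => if j = i then false else if j = i - 1 then true else o j)
    (π π' : Fin n ≃ ZMod n) (hπ : linExt o π) (hπ' : linExt o' π') :
    (∀ σ : V ≃ ZMod n, tpro G π (toggle G i σ) = toggle G i (tpro G π' σ)) ∧
      ∃ φ : (V ≃ ZMod n) ≃ (V ≃ ZMod n),
        ∀ σ : V ≃ ZMod n, tpro G π (φ σ) = φ (tpro G π' σ) := by
  subst ho'
  have hconj := tpro_toggle_eq_toggle_tpro_flipAt G hsource hπ hπ'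
  exact ⟨hconj, (toggle_involutive G i).toPerm, hconj⟩

theorem stmt9 {V : Type*} [Fintype V] (n : ℕ) (hn : 2 ≤ n) (hcard : Fintype.card V = n)
    (G : SimpleGraph V) (o : ZMod n → Bool) (i : ZMod n)
    (hsource : o i = true ∧ o (i - 1) = false)
    (o' : ZMod n → Bool)
    (ho' : o' = fun j => if j = i then false else if j = i - 1 then true else o j)
    (π π' : Fin n ≃ ZMod n) (hπ : linExt o π) (hπ' : linExt o' π') :
    (∀ σ : V ≃ ZMod n, tpro G π (toggle G i σ) = toggle G i (tpro G π' σ)) ∧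
      ∃ φ : (V ≃ ZMod n) ≃ (V ≃ ZMod n),
        ∀ σ : V ≃ ZMod n, tpro G π (φ σ) = φ (tpro G π' σ) :=
  stmt9_general n G o i hsource o' ho' π π' hπ hπ'
end

section
/- For integers n ≥ 2 and k, the word Y = (τ_{k+n-1}···τ_{k+1}τ_k) as a composition of toggles on labelings of any graph G with n vertices (indices modulo n) equals TPro_β where β is the acyclic orientation of Cycle_n with unique source k and unique sink k-1 (equivalently, with each edge {i, i+1} ≠ {k-1, k} oriented from i to i+1 and the edge {k-1, k} oriented from k to k-1). Specialization criterion: if Y is a word in which each toggle τ_1,...,τ_n appears exactly once and, for every suffix X of Y and every arrow a → b of an acyclic orientation β of Cycle_n, the count of τ_a in X minus the count of τ_b in X lies in {0,1}, then Y = TPro_β as a permutation of Λ_G. -/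
/-!
Toggles at non-adjacent indices commute, so applying the toggles of a word that uses each
index once only depends on the relative order, within the word, of each pair of cyclically
adjacent indices `i`, `i + 1`: moving the first letter of one word to the front of the other
only crosses letters it commutes with. Both words of the theorem order every such pair as the
orientation `β` does, and so does the linear extension `π` defining `TPro_β`.
-/

open scoped Classical

namespace List

variable {α β : Type*}

theorem Nodup.pair_sublist_asymm {l : List α} (hl : l.Nodup) {a b : α} (h : [a, b] <+ l) :
    ¬ [b, a] <+ l := by
  induction l with
  | nil => simp at h
  | cons c t ih =>
    intro h'
    obtain ⟨hc, ht⟩ := nodup_cons.mp hl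
    rw [sublist_cons_iff] at h h'
    grind [Sublist.subset]

theorem Pairwise.pair_sublist [Preorder α] {l : List α} (hl : l.Pairwise (· < ·)) {a b : α}
    (ha : a ∈ l) (hb : b ∈ l) (hab : a < b) : [a, b] <+ l :=
  sublist_of_subperm_of_pairwise
    (subperm_of_subset (by simp [hab.ne]) (by simp [ha, hb])) (by simp [hab]) hl

theorem pair_sublist_of_count_take_le [BEq α] [LawfulBEq α] {l : List α} {a b : α}
    (hab : a ≠ b) (hb : b ∈ l) (h : ∀ m, (l.take m).count b ≤ (l.take m).count a) :
    [a, b] <+ l := by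
  obtain ⟨A, B, rfl⟩ := append_of_mem hb
  have hcount := h (A.length + 1)
  have ha : a ∈ A := by
    simp [take_append, take_of_length_le (Nat.le_succ _), count_append, hab.symm] at hcount
    exact count_pos_iff.mp (by omega)
  exact (singleton_sublist.mpr ha).append (singleton_sublist.mpr mem_cons_self)

theorem foldl_append_cons_of_commute {f : β → α → β} {A : List α} {m : α}
    (h : ∀ a ∈ A, ∀ y, f (f y a) m = f (f y m) a) (B : List α) (x : β) :
    (A ++ m :: B).foldl f x = (A ++ B).foldl f (f x m) := by
  induction A generalizing x with
  | nil => rfl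
  | cons a A ih =>
    simp only [cons_append, foldl_cons]
    rw [ih (fun b hb => h b (mem_cons_of_mem a hb)), h a mem_cons_self]

theorem Perm.foldl_eq_of_pair_sublist {f : β → α → β} {r : α → α → Prop}
    (hcomm : ∀ a b, a ≠ b → ¬ r a b → ∀ x, f (f x a) b = f (f x b) a)
    {l₁ l₂ : List α} (hp : l₁ ~ l₂) (hl₂ : l₂.Nodup)
    (hord : ∀ a b, r a b → [a, b] <+ l₁ → [a, b] <+ l₂) (x : β) :
    l₁.foldl f x = l₂.foldl f x := by
  induction l₂ generalizing l₁ x with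
  | nil => rw [perm_nil.mp hp]
  | cons m M ih =>
    obtain ⟨hmM, hM⟩ := nodup_cons.mp hl₂
    obtain ⟨A, B, rfl⟩ := append_of_mem (hp.mem_iff.mpr mem_cons_self)
    have hAB : A ++ B ~ M := (perm_cons m).mp (perm_middle.symm.trans hp)
    have hne : ∀ a ∈ A ++ B, a ≠ m := fun a ha h => hmM (h ▸ hAB.subset ha)
    have hnot : ∀ a ∈ A, ¬ r a m := fun a ha hr => by
      have hL : [a, m] <+ A ++ m :: B :=
        (singleton_sublist.mpr ha).append (singleton_sublist.mpr mem_cons_self)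
      have hM : [m, a] <+ m :: M :=
        cons_sublist_cons.mpr (singleton_sublist.mpr (hAB.subset (mem_append_left B ha)))
      exact hl₂.pair_sublist_asymm (hord a m hr hL) hM
    rw [foldl_append_cons_of_commute
      (fun a ha => hcomm a m (hne a (mem_append_left B ha)) (hnot a ha)), foldl_cons]
    refine ih hAB hM (fun a b hr h => ?_) _
    have h' := hord a b hr (h.trans ((sublist_cons_self m B).append_left A))
    simpa [sublist_cons_iff, hne a (h.subset mem_cons_self)] using h'

end List

section Toggle

variable {V : Type*} {n : ℕ} (G : SimpleGraph V)

theorem exists_toggle_eq_trans (i : ZMod n) (σ : V ≃ ZMod n) :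
    ∃ s : Equiv.Perm (ZMod n),
      toggle G i σ = σ.trans s ∧ ∀ x, x ≠ i → x ≠ i + 1 → s x = x := by
  unfold toggle
  split_ifs
  · exact ⟨1, rfl, fun _ _ _ => rfl⟩
  · exact ⟨_, rfl, fun _ => Equiv.swap_apply_of_ne_of_ne⟩

theorem toggle_trans_of_apply_eq {s : Equiv.Perm (ZMod n)} {i : ZMod n} (hi : s i = i)
    (hi' : s (i + 1) = i + 1) (σ : V ≃ ZMod n) :
    toggle G i (σ.trans s) = (toggle G i σ).trans s := by
  have hsymm : ∀ x, s x = x → (σ.trans s).symm x = σ.symm x := fun x hx => by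
    simp [s.symm_apply_eq.mpr hx.symm]
  have hcomm : s * Equiv.swap i (i + 1) = Equiv.swap i (i + 1) * s := by
    rw [Equiv.mul_swap_eq_swap_mul, hi, hi']
  unfold toggle
  rw [hsymm i hi, hsymm (i + 1) hi']
  split_ifs
  · rfl
  · simp only [Equiv.trans_assoc]
    exact congrArg σ.trans hcomm.symm

theorem toggle_toggle_comm_s19 {i j : ZMod n} (hij : i ≠ j) (hj : j ≠ i + 1) (hi : i ≠ j + 1)
    (σ : V ≃ ZMod n) : toggle G i (toggle G j σ) = toggle G j (toggle G i σ) := by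
  obtain ⟨s, hs, hs_fix⟩ := exists_toggle_eq_trans G j σ
  obtain ⟨t, ht, ht_fix⟩ := exists_toggle_eq_trans G i σ
  have hi1 : i + 1 ≠ j + 1 := fun h => hij (add_right_cancel h)
  have hdisj : s.Disjoint t := fun x => by
    by_cases hxi : x = i
    · exact .inl (hxi ▸ hs_fix _ hij hi)
    by_cases hxi' : x = i + 1
    · exact .inl (hxi' ▸ hs_fix _ hj.symm hi1)
    exact .inr (ht_fix x hxi hxi')
  rw [hs, ht, toggle_trans_of_apply_eq G (hs_fix _ hij hi) (hs_fix _ hj.symm hi1),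
    toggle_trans_of_apply_eq G (ht_fix _ hij.symm hj) (ht_fix _ hi.symm hi1.symm), hs, ht,
    Equiv.trans_assoc, Equiv.trans_assoc]
  exact congrArg σ.trans hdisj.commute

end Toggle

section LinearExtension

open List

variable {n : ℕ}

/-- `l` lists the vertices of the cycle so that each edge `{a, a + 1}` is crossed in the direction
of `β`: from `a` to `a + 1` when `o a`, backwards otherwise. -/
def IsLinearExtension (o : ZMod n → Bool) (l : List (ZMod n)) : Prop :=
  ∀ a : ZMod n, if o a then [a, a + 1] <+ l else [a + 1, a] <+ l

theorem IsLinearExtension.pair_sublist {o : ZMod n → Bool} {l₁ l₂ : List (ZMod n)}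
    (h₁ : IsLinearExtension o l₁) (h₂ : IsLinearExtension o l₂) (hl₁ : l₁.Nodup)
    {a b : ZMod n} (hab : b = a + 1 ∨ a = b + 1) (h : [a, b] <+ l₁) : [a, b] <+ l₂ := by
  rcases hab with rfl | rfl
  · have h₁a := h₁ a
    have h₂a := h₂ a
    split_ifs at h₁a h₂a
    · exact h₂a
    · exact absurd h₁a (hl₁.pair_sublist_asymm h)
  · have h₁b := h₁ b
    have h₂b := h₂ b
    split_ifs at h₁b h₂b
    · exact absurd h (hl₁.pair_sublist_asymm h₁b)
    · exact h₂b

theorem isLinearExtension_ofFn {o : ZMod n → Bool} {π : Fin n ≃ ZMod n} (hπ : linExt o π) :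
    IsLinearExtension o (ofFn fun k => π k) := by
  have key : ∀ a b : ZMod n, π.symm a < π.symm b → [a, b] <+ ofFn fun k => π k :=
    fun a b h => by
      simpa [ofFn_eq_map] using
        ((pairwise_lt_finRange n).pair_sublist (mem_finRange _) (mem_finRange _) h).map π
  intro a
  have ha := hπ a
  split_ifs at ha ⊢
  exacts [key _ _ ha, key _ _ ha]

theorem isLinearExtension_of_count_take (hn : 2 ≤ n) {o : ZMod n → Bool} {L : List (ZMod n)}
    (hmem : ∀ a, a ∈ L)
    (h : ∀ (m : ℕ) (i : ZMod n),
      (o i = true → (L.take m).count (i + 1) ≤ (L.take m).count i) ∧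
      (o i = false → (L.take m).count i ≤ (L.take m).count (i + 1))) :
    IsLinearExtension o L := by
  have : Fact (1 < n) := ⟨hn⟩
  have hne : ∀ i : ZMod n, i ≠ i + 1 := by simp
  intro i
  split_ifs with hi
  · exact pair_sublist_of_count_take_le (hne i) (hmem _) fun m => (h m i).1 hi
  · exact pair_sublist_of_count_take_le (hne i).symm (hmem _)
      fun m => (h m i).2 (by simpa using hi)

def rangeFrom (k : ZMod n) : List (ZMod n) :=
  (range n).map fun j : ℕ => k + (j : ZMod n)

theorem isLinearExtension_rangeFrom (hn : 2 ≤ n) (k : ZMod n) :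
    IsLinearExtension (fun i => decide (i ≠ k - 1)) (rangeFrom k) := by
  have : NeZero n := ⟨by omega⟩
  have key : ∀ a b, a < b → b < n → [k + (a : ZMod n), k + b] <+ rangeFrom k :=
    fun a b hab hb => (pairwise_lt_range.pair_sublist (mem_range.mpr (hab.trans hb))
      (mem_range.mpr hb) hab).map fun j : ℕ => k + (j : ZMod n)
  intro i
  by_cases hi : i = k - 1
  · subst hi
    have hk : k - 1 = k + ((n - 1 : ℕ) : ZMod n) := by
      rw [Nat.cast_pred (by omega), ZMod.natCast_self]; ring
    rw [if_neg (by simp), sub_add_cancel, hk]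
    simpa using key 0 (n - 1) (by omega) (by omega)
  · have hi₀ : i = k + ((i - k).val : ZMod n) := by rw [ZMod.natCast_zmod_val]; ring
    have hi₁ : i + 1 = k + (((i - k).val + 1 : ℕ) : ZMod n) := by
      rw [Nat.cast_succ, ← add_assoc, ← hi₀]
    have hlt : (i - k).val + 1 < n := by
      by_contra hge
      rw [show (i - k).val + 1 = n by have := ZMod.val_lt (i - k); omega, ZMod.natCast_self,
        add_zero] at hi₁
      exact hi (eq_sub_of_add_eq hi₁)
    have h := key (i - k).val ((i - k).val + 1) (by omega) hlt
    rw [← hi₁, ← hi₀] at h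
    simpa [hi] using h

theorem nodup_rangeFrom (k : ZMod n) : (rangeFrom k).Nodup :=
  nodup_range.map_on fun a ha b hb h => by
    have := (ZMod.natCast_eq_natCast_iff' a b n).mp (add_left_cancel h)
    rwa [Nat.mod_eq_of_lt (mem_range.mp ha), Nat.mod_eq_of_lt (mem_range.mp hb)] at this

theorem mem_rangeFrom [NeZero n] (k a : ZMod n) : a ∈ rangeFrom k :=
  mem_map.mpr ⟨(a - k).val, mem_range.mpr (ZMod.val_lt _), by simp⟩

end LinearExtension

theorem applyToggles_eq_tpro {V : Type*} {n : ℕ} (G : SimpleGraph V) {o : ZMod n → Bool}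
    {π : Fin n ≃ ZMod n} (hπ : linExt o π) {L : List (ZMod n)} (hL : L.Nodup)
    (hmem : ∀ a, a ∈ L) (hLo : IsLinearExtension o L) (σ : V ≃ ZMod n) :
    applyToggles G L σ = tpro G π σ := by
  have hM : (List.ofFn fun k => π k).Nodup := List.nodup_ofFn.mpr π.injective
  have hp : L.Perm (List.ofFn fun k => π k) :=
    (List.perm_ext_iff_of_nodup hL hM).mpr fun a => by simp [hmem a, π.surjective a]
  exact hp.foldl_eq_of_pair_sublist (r := fun a b => b = a + 1 ∨ a = b + 1)
    (fun a b hab hr τ =>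
      toggle_toggle_comm_s19 G hab.symm (fun h => hr (.inr h)) (fun h => hr (.inl h)) τ)
    hM (fun a b hr h => hLo.pair_sublist (isLinearExtension_ofFn hπ) hL hr h) σ

theorem stmt19_general {V : Type*} (n : ℕ) (hn : 2 ≤ n)
    (G : SimpleGraph V) :
    -- Part (a): the word τ_{k+n-1} ⋯ τ_{k+1} τ_k equals TPro_β, where β is the acyclic
    -- orientation of Cycle_n with unique source k and unique sink k-1.
    (∀ (k : ZMod n) (π : Fin n ≃ ZMod n),
        linExt (fun i : ZMod n => decide (i ≠ k - 1)) π →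
        ∀ σ : V ≃ ZMod n,
          applyToggles G ((List.range n).map (fun j => k + (j : ZMod n))) σ = tpro G π σ) ∧
    -- Part (b): specialization criterion.  If each toggle appears exactly once in the word
    -- `L` (listed in order of application, so suffixes of the word are prefixes of `L`) and
    -- for every suffix and every arrow a → b of β the count of τ_a minus the count of τ_b
    -- lies in {0, 1}, then the word equals TPro_β.
    ∀ (o : ZMod n → Bool) (π : Fin n ≃ ZMod n), linExt o π →
      ∀ L : List (ZMod n), (∀ a : ZMod n, L.count a = 1) →
        (∀ (m : ℕ) (i : ZMod n),
          (o i = true →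
            (L.take m).count (i + 1) ≤ (L.take m).count i ∧
              (L.take m).count i ≤ (L.take m).count (i + 1) + 1) ∧
          (o i = false →
            (L.take m).count i ≤ (L.take m).count (i + 1) ∧
              (L.take m).count (i + 1) ≤ (L.take m).count i + 1)) →
        ∀ σ : V ≃ ZMod n, applyToggles G L σ = tpro G π σ := by
  have : NeZero n := ⟨by omega⟩
  refine ⟨fun k π hπ σ => ?_, fun o π hπ L hcount hcond σ => ?_⟩
  · -- `(j : ZMod n)` coerces the whole list `List.range n` monadically, as a `bind`.
    have hword : ((List.range n).map fun j => k + (j : ZMod n)) = rangeFrom k := by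
      simp [rangeFrom, ← List.map_eq_flatMap]
    rw [hword]
    exact applyToggles_eq_tpro G hπ (nodup_rangeFrom k) (mem_rangeFrom k)
      (isLinearExtension_rangeFrom hn k) σ
  · have hmem : ∀ a, a ∈ L := fun a => List.count_pos_iff.mp (by simp [hcount a])
    have hL : L.Nodup := List.nodup_iff_count_le_one.mpr fun a => (hcount a).le
    exact applyToggles_eq_tpro G hπ hL hmem (isLinearExtension_of_count_take hn hmem fun m i =>
        ⟨fun hi => ((hcond m i).1 hi).1, fun hi => ((hcond m i).2 hi).1⟩) σ

theorem stmt19 {V : Type*} [Fintype V] (n : ℕ) (hn : 2 ≤ n) (hcard : Fintype.card V = n)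
    (G : SimpleGraph V) :
    -- Part (a): the word τ_{k+n-1} ⋯ τ_{k+1} τ_k equals TPro_β, where β is the acyclic
    -- orientation of Cycle_n with unique source k and unique sink k-1.
    (∀ (k : ZMod n) (π : Fin n ≃ ZMod n),
        linExt (fun i : ZMod n => decide (i ≠ k - 1)) π →
        ∀ σ : V ≃ ZMod n,
          applyToggles G ((List.range n).map (fun j => k + (j : ZMod n))) σ = tpro G π σ) ∧
    -- Part (b): specialization criterion.  If each toggle appears exactly once in the word
    -- `L` (listed in order of application, so suffixes of the word are prefixes of `L`) and
    -- for every suffix and every arrow a → b of β the count of τ_a minus the count of τ_b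
    -- lies in {0, 1}, then the word equals TPro_β.
    ∀ (o : ZMod n → Bool) (π : Fin n ≃ ZMod n), linExt o π →
      ∀ L : List (ZMod n), (∀ a : ZMod n, L.count a = 1) →
        (∀ (m : ℕ) (i : ZMod n),
          (o i = true →
            (L.take m).count (i + 1) ≤ (L.take m).count i ∧
              (L.take m).count i ≤ (L.take m).count (i + 1) + 1) ∧
          (o i = false →
            (L.take m).count i ≤ (L.take m).count (i + 1) ∧
              (L.take m).count (i + 1) ≤ (L.take m).count i + 1)) →
        ∀ σ : V ≃ ZMod n, applyToggles G L σ = tpro G π σ :=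
  stmt19_general n hn G
end
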